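/- arXiv:2209.01150 — 2 statements merged into one kernel-verified Lean document; each statement's English description precedes it below -/
import Mathlib

section
/- Let X be a topological space satisfying the following 'quasi-Lindelöf' property with respect to a σ-ideal N: every family of open sets has a countable subfamily whose union differs from the union of the whole family by a set in N. For u : V → [-∞,∞] on an open V ⊂ X, define u_*(x) = sup over open W ∋ x of the N-essential infimum of u on V ∩ W. Then u_* is idempotent, i.e. (u_*)_* = u_* on V. -/
/-!
At each point of `V` where `u < u_*`, some rational `q` lies strictly between `u` and `u_*`;
the points where `q < u_*` are covered by the open sets `W` on which `{u < q}` is `N`-null, and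
quasi-Lindelöf reduces this cover to a countable one up to an `N`-null set. Hence `u_* ≤ u`
off an `N`-null set, so `u` and `u_*` have the same `N`-essential infimum on every `V ∩ W`
(the inequality `ess inf_{V ∩ W} u ≤ u_*` on `V ∩ W` holds everywhere), and `(u_*)_* = u_*`.
-/

open Filter Topology Set

/-- A σ-ideal of subsets: closed under subsets and countable unions. -/
def IsSigmaIdeal {X : Type*} (N : Set (Set X)) : Prop :=
  (∀ ⦃A B : Set X⦄, A ⊆ B → B ∈ N → A ∈ N) ∧
  (∀ f : ℕ → Set X, (∀ n, f n ∈ N) → (⋃ n, f n) ∈ N)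

/-- The `N`-essential infimum of `u` on `E`. -/
noncomputable def essInfN {X : Type*} (N : Set (Set X)) (u : X → EReal) (E : Set X) : EReal :=
  sSup {k : EReal | {x | x ∈ E ∧ u x < k} ∈ N}

/-- The lsc-regularization `u_*`. -/
noncomputable def lscReg {X : Type*} [TopologicalSpace X] (N : Set (Set X)) (V : Set X)
    (u : X → EReal) (x : X) : EReal :=
  ⨆ (W : Set X) (_ : IsOpen W) (_ : x ∈ W), essInfN N u (V ∩ W)

/-- The quasi-Lindelöf property: every family of open sets has a countable
subfamily whose union differs from the union of the whole family by a set in `N`. -/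
def QuasiLindelof {X : Type*} [TopologicalSpace X] (N : Set (Set X)) : Prop :=
  ∀ 𝒱 : Set (Set X), (∀ U ∈ 𝒱, IsOpen U) →
    ∃ 𝒱' ⊆ 𝒱, 𝒱'.Countable ∧ (⋃₀ 𝒱 \ ⋃₀ 𝒱') ∈ N

section SigmaIdeal

variable {X : Type*} {N : Set (Set X)}

namespace IsSigmaIdeal

theorem mono (hN : IsSigmaIdeal N) {A B : Set X} (hAB : A ⊆ B) (hB : B ∈ N) : A ∈ N :=
  hN.1 hAB hB

theorem union_mem (hN : IsSigmaIdeal N) {A B : Set X} (hA : A ∈ N) (hB : B ∈ N) : A ∪ B ∈ N := by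
  refine hN.mono ?_ (hN.2 (fun n => if n = 0 then A else B) fun n => by split <;> assumption)
  rintro x (hx | hx)
  · exact mem_iUnion.2 ⟨0, by simpa using hx⟩
  · exact mem_iUnion.2 ⟨1, by simpa using hx⟩

theorem iUnion_mem (hN : IsSigmaIdeal N) (h0 : ∅ ∈ N) {ι : Type*} [Countable ι] {f : ι → Set X}
    (hf : ∀ i, f i ∈ N) : ⋃ i, f i ∈ N := by
  rcases isEmpty_or_nonempty ι with hι | hι
  · simpa using h0
  · obtain ⟨g, hg⟩ := exists_surjective_nat ι
    rw [← hg.iUnion_comp]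
    exact hN.2 _ fun n => hf (g n)

theorem biUnion_mem (hN : IsSigmaIdeal N) (h0 : ∅ ∈ N) {ι : Type*} {S : Set ι}
    (hS : S.Countable) {f : ι → Set X} (hf : ∀ i ∈ S, f i ∈ N) : ⋃ i ∈ S, f i ∈ N := by
  have := hS.to_subtype
  rw [biUnion_eq_iUnion]
  exact hN.iUnion_mem h0 fun i => hf i i.2

end IsSigmaIdeal

theorem QuasiLindelof.empty_mem [TopologicalSpace X] (hQL : QuasiLindelof N) : ∅ ∈ N := by
  obtain ⟨𝒱', h𝒱', -, hdiff⟩ := hQL ∅ (by simp)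
  simpa [subset_empty_iff.1 h𝒱'] using hdiff

section essInfN

variable {u v : X → EReal} {E : Set X} {c : EReal}

theorem le_essInfN (h : {x | x ∈ E ∧ u x < c} ∈ N) : c ≤ essInfN N u E :=
  le_sSup h

theorem le_essInfN_of_forall_le (h0 : ∅ ∈ N) (h : ∀ x ∈ E, c ≤ u x) : c ≤ essInfN N u E :=
  le_essInfN <| by
    convert h0
    exact eq_empty_of_forall_notMem fun x hx => (h x hx.1).not_gt hx.2

theorem IsSigmaIdeal.setOf_lt_mem_of_lt_essInfN (hN : IsSigmaIdeal N) (hc : c < essInfN N u E) :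
    {x | x ∈ E ∧ u x < c} ∈ N := by
  obtain ⟨k, hk, hck⟩ := lt_sSup_iff.1 hc
  exact hN.mono (B := {x | x ∈ E ∧ u x < k}) (fun x hx => ⟨hx.1, hx.2.trans hck⟩) hk

theorem IsSigmaIdeal.essInfN_le_essInfN (hN : IsSigmaIdeal N)
    (h : {x | x ∈ E ∧ u x < v x} ∈ N) : essInfN N v E ≤ essInfN N u E := by
  refine sSup_le fun k hk => le_essInfN <| hN.mono ?_ (hN.union_mem hk h)
  intro x ⟨hx, hux⟩
  by_cases hvx : v x < k
  · exact Or.inl ⟨hx, hvx⟩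
  · exact Or.inr ⟨hx, hux.trans_le (not_lt.1 hvx)⟩

end essInfN

section lscReg

variable [TopologicalSpace X] {V W : Set X} {u : X → EReal} {x : X} {c : EReal}

theorem essInfN_le_lscReg (hW : IsOpen W) (hx : x ∈ W) :
    essInfN N u (V ∩ W) ≤ lscReg N V u x :=
  le_iSup₂_of_le W hW (le_iSup_of_le hx le_rfl)

theorem lt_lscReg_iff :
    c < lscReg N V u x ↔ ∃ W, IsOpen W ∧ x ∈ W ∧ c < essInfN N u (V ∩ W) := by
  simp only [lscReg, lt_iSup_iff, exists_prop]

theorem QuasiLindelof.setOf_lt_lt_lscReg_mem (hN : IsSigmaIdeal N) (hQL : QuasiLindelof N)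
    (c : EReal) : {y | y ∈ V ∧ u y < c ∧ c < lscReg N V u y} ∈ N := by
  set 𝒱 : Set (Set X) := {W | IsOpen W ∧ {z | z ∈ V ∩ W ∧ u z < c} ∈ N}
  obtain ⟨𝒱', h𝒱', hcount, hdiff⟩ := hQL 𝒱 fun W hW => hW.1
  refine hN.mono ?_ (hN.union_mem hdiff
    (hN.biUnion_mem hQL.empty_mem hcount fun W hW => (h𝒱' hW).2))
  rintro y ⟨hyV, hyc, hcy⟩
  obtain ⟨W, hW, hyW, hcW⟩ := lt_lscReg_iff.1 hcy
  by_cases hy' : y ∈ ⋃₀ 𝒱'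
  · obtain ⟨W', hW', hyW'⟩ := hy'
    exact Or.inr (mem_biUnion hW' ⟨⟨hyV, hyW'⟩, hyc⟩)
  · exact Or.inl ⟨⟨W, ⟨hW, hN.setOf_lt_mem_of_lt_essInfN hcW⟩, hyW⟩, hy'⟩

theorem QuasiLindelof.setOf_lt_lscReg_mem (hN : IsSigmaIdeal N) (hQL : QuasiLindelof N) :
    {y | y ∈ V ∧ u y < lscReg N V u y} ∈ N := by
  refine hN.mono ?_ (hN.iUnion_mem hQL.empty_mem fun q : ℚ =>
    hQL.setOf_lt_lt_lscReg_mem hN (V := V) (u := u) ((q : ℝ) : EReal))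
  rintro y ⟨hyV, hy⟩
  obtain ⟨q, huq, hqy⟩ := EReal.exists_rat_btwn_of_lt hy
  exact mem_iUnion.2 ⟨q, hyV, huq, hqy⟩

theorem QuasiLindelof.essInfN_lscReg_inter (hN : IsSigmaIdeal N) (hQL : QuasiLindelof N)
    (hW : IsOpen W) : essInfN N (lscReg N V u) (V ∩ W) = essInfN N u (V ∩ W) := by
  refine le_antisymm (hN.essInfN_le_essInfN ?_) ?_
  · exact hN.mono (B := {y | y ∈ V ∧ u y < lscReg N V u y}) (fun y hy => ⟨hy.1.1, hy.2⟩)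
      (hQL.setOf_lt_lscReg_mem hN)
  · exact le_essInfN_of_forall_le hQL.empty_mem fun y hy => essInfN_le_lscReg hW hy.2

theorem QuasiLindelof.lscReg_lscReg (hN : IsSigmaIdeal N) (hQL : QuasiLindelof N) :
    lscReg N V (lscReg N V u) = lscReg N V u := by
  funext x
  refine iSup_congr fun W => iSup_congr fun hW => ?_
  simp only [hQL.essInfN_lscReg_inter hN hW]

end lscReg

end SigmaIdeal

theorem stmt1_general {X : Type*} [TopologicalSpace X] (N : Set (Set X))
    (hN : IsSigmaIdeal N) (hQL : QuasiLindelof N)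
    (V : Set X) (u : X → EReal) :
    ∀ x ∈ V, lscReg N V (lscReg N V u) x = lscReg N V u x :=
  fun x _ => congrFun (hQL.lscReg_lscReg hN) x

/-- In a topological space with the quasi-Lindelöf property with respect to a
σ-ideal `N`, the regularization `u ↦ u_*` is idempotent: `(u_*)_* = u_*` on `V`. -/
theorem stmt1 {X : Type*} [TopologicalSpace X] (N : Set (Set X))
    (hN : IsSigmaIdeal N) (hQL : QuasiLindelof N)
    (V : Set X) (hV : IsOpen V) (u : X → EReal) :
    ∀ x ∈ V, lscReg N V (lscReg N V u) x = lscReg N V u x :=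
  stmt1_general N hN hQL V u
end

section
/- Let X be a topological space, N a σ-ideal of subsets of X satisfying the quasi-Lindelöf property (every family of open sets admits a countable subfamily covering the union up to a set in N). Let F be a nonempty family of upper semicontinuous functions on an open set V that is closed under taking pointwise minima of finitely many members. If g = inf_{u∈F} u is the pointwise infimum, then there exists a decreasing sequence (u_j) in F and a set E ∈ N such that u_j(x) → g(x) for all x ∈ V \ E. -/
/-!
For each rational level `q`, quasi-Lindelöf applied to the open sets `{x ∈ V | u x < q}`,
`u ∈ F`, yields countably many members of `F` whose sublevel sets cover all the others up to a
set in `N`. The union `E` of these countably many exceptional sets lies in `N`. Running minima of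
an enumeration of all chosen members form a decreasing sequence in `F`; at `x ∈ V \ E`, whenever
`inf F (x) < q`, some chosen member, hence some term of the sequence, is `< q` at `x`.
-/

open Filter Topology Set

section

variable {X : Type*}

theorem IsSigmaIdeal.iUnion_mem_s5 {N : Set (Set X)} (hN : IsSigmaIdeal N) {ι : Type*}
    [Countable ι] [Nonempty ι] {s : ι → Set X} (hs : ∀ i, s i ∈ N) : (⋃ i, s i) ∈ N := by
  obtain ⟨e, he⟩ := exists_surjective_nat ι
  rw [← he.iUnion_comp]
  exact hN.2 _ fun n => hs (e n)

theorem QuasiLindelof.exists_countable_biUnion_diff_mem [TopologicalSpace X]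
    {N : Set (Set X)} (hQL : QuasiLindelof N) {ι : Type*} (S : Set ι) (f : ι → Set X)
    (hf : ∀ i ∈ S, IsOpen (f i)) :
    ∃ C ⊆ S, C.Countable ∧ ((⋃ i ∈ S, f i) \ ⋃ i ∈ C, f i) ∈ N := by
  obtain ⟨𝒱', h𝒱'S, h𝒱'c, h𝒱'N⟩ := hQL (f '' S) (forall_mem_image.2 hf)
  choose g hgS hfg using fun W : 𝒱' => h𝒱'S W.2
  have := h𝒱'c.to_subtype
  refine ⟨range g, range_subset_iff.2 hgS, countable_range g, ?_⟩
  have h𝒱' : (⋃ i ∈ range g, f i) = ⋃₀ 𝒱' := by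
    rw [biUnion_range, sUnion_eq_iUnion]
    exact iUnion_congr hfg
  rwa [h𝒱', ← sUnion_image]

end

theorem Set.Countable.exists_antitone_mem_le {α : Type*} [SemilatticeInf α] {F C : Set α}
    (hF : ∀ u ∈ F, ∀ v ∈ F, u ⊓ v ∈ F) (hC : C.Countable) (hCne : C.Nonempty) (hCF : C ⊆ F) :
    ∃ us : ℕ → α, (∀ j, us j ∈ F) ∧ Antitone us ∧ ∀ u ∈ C, ∃ j, us j ≤ u := by
  obtain ⟨v, rfl⟩ := hC.exists_eq_range hCne
  refine ⟨fun j => (Finset.range (j + 1)).inf' Finset.nonempty_range_add_one v,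
    fun j => Finset.inf'_mem F hF _ _ _ fun i _ => hCF (mem_range_self i),
    fun i j hij => Finset.inf'_mono _ (Finset.range_subset_range.2 (by omega)) _, ?_⟩
  rintro _ ⟨i, rfl⟩
  exact ⟨i, Finset.inf'_le _ (Finset.self_mem_range_succ i)⟩

theorem EReal.tendsto_of_antitone_of_forall_rat_gt {a : ℕ → EReal} {b : EReal}
    (ha : Antitone a) (hb : ∀ j, b ≤ a j) (h : ∀ q : ℚ, b < (q : ℝ) → ∃ j, a j < (q : ℝ)) :
    Tendsto a atTop (𝓝 b) := by
  have hinf : ⨅ j, a j = b := by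
    refine le_antisymm (not_lt.1 fun hlt => ?_) (le_iInf hb)
    obtain ⟨q, hbq, hqa⟩ := EReal.exists_rat_btwn_of_lt hlt
    obtain ⟨j, hj⟩ := h q hbq
    exact (hqa.trans_le (iInf_le a j)).not_gt hj
  exact hinf ▸ tendsto_atTop_iInf ha

theorem stmt5_general {X : Type*} [TopologicalSpace X] (N : Set (Set X))
    (hN : IsSigmaIdeal N) (hQL : QuasiLindelof N)
    (V : Set X) (F : Set (X → EReal)) (hFne : F.Nonempty)
    (husc : ∀ u ∈ F, ∀ a : ℝ, IsOpen {x | x ∈ V ∧ u x < (a : EReal)})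
    (hmin : ∀ u ∈ F, ∀ v ∈ F, (fun x => min (u x) (v x)) ∈ F) :
    ∃ us : ℕ → (X → EReal), (∀ j, us j ∈ F) ∧ (∀ j x, us (j + 1) x ≤ us j x) ∧
      ∃ E ∈ N, ∀ x ∈ V \ E,
        Filter.Tendsto (fun j => us j x) Filter.atTop (𝓝 (⨅ u ∈ F, u x)) := by
  let L : ℚ → (X → EReal) → Set X := fun q u => {x | x ∈ V ∧ u x < ((q : ℝ) : EReal)}
  choose C hCF hCc hCN using fun q : ℚ =>
    hQL.exists_countable_biUnion_diff_mem F (L q) fun u hu => husc u hu q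
  obtain ⟨u₀, hu₀⟩ := hFne
  obtain ⟨us, husF, husanti, husle⟩ := ((countable_iUnion hCc).insert u₀).exists_antitone_mem_le
    hmin (insert_nonempty _ _) (insert_subset hu₀ (iUnion_subset hCF))
  refine ⟨us, husF, fun j x => husanti j.le_succ x, _, hN.iUnion_mem_s5 hCN, ?_⟩
  rintro x ⟨hxV, hxE⟩
  refine EReal.tendsto_of_antitone_of_forall_rat_gt (fun _ _ hij => husanti hij x)
    (fun j => iInf₂_le (us j) (husF j)) fun q hq => ?_
  obtain ⟨u, hu, hux⟩ : ∃ u ∈ F, u x < (q : ℝ) := by simpa [iInf_lt_iff] using hq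
  have hxC : x ∈ ⋃ w ∈ C q, L q w := by
    by_contra hxC
    exact hxE (mem_iUnion.2 ⟨q, mem_biUnion hu ⟨hxV, hux⟩, hxC⟩)
  obtain ⟨w, hw, -, hwx⟩ := mem_iUnion₂.1 hxC
  obtain ⟨j, hj⟩ := husle w (mem_insert_of_mem _ (mem_iUnion.2 ⟨q, hw⟩))
  exact ⟨j, (hj x).trans_lt hwx⟩

/-- If `F` is a nonempty family of upper semicontinuous functions on an open set `V`,
closed under finite minima, and the σ-ideal `N` has the quasi-Lindelöf property,
then the pointwise infimum `g` of `F` is the limit of a decreasing sequence from `F`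
at every point of `V` outside a set in `N`. -/
theorem stmt5 {X : Type*} [TopologicalSpace X] (N : Set (Set X))
    (hN : IsSigmaIdeal N) (hQL : QuasiLindelof N)
    (V : Set X) (hV : IsOpen V) (F : Set (X → EReal)) (hFne : F.Nonempty)
    (husc : ∀ u ∈ F, ∀ a : ℝ, IsOpen {x | x ∈ V ∧ u x < (a : EReal)})
    (hmin : ∀ u ∈ F, ∀ v ∈ F, (fun x => min (u x) (v x)) ∈ F) :
    ∃ us : ℕ → (X → EReal), (∀ j, us j ∈ F) ∧ (∀ j x, us (j + 1) x ≤ us j x) ∧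
      ∃ E ∈ N, ∀ x ∈ V \ E,
        Filter.Tendsto (fun j => us j x) Filter.atTop (𝓝 (⨅ u ∈ F, u x)) :=
  stmt5_general N hN hQL V F hFne husc hmin
end
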